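/- Let n ≥ 1 and take X_i = σ_X acting on the i-th qubit and Z_i = σ_Z acting on the i-th qubit of ℂ^{2^n}, so that X^a = σ_X(a) and Z^b = σ_Z(b) are the genuine Pauli strings. Let U be the swap-gadget unitary on ℂ^{2^n}_B ⊗ ℂ^{2^n}_{E₁} ⊗ ℂ^{2^n}_{E₂} given by U = CNOT_{E₂→E₁} ∘ CX_{E₁→B} ∘ (I ⊗ H^{⊗n} ⊗ I) ∘ CZ_{E₁→B} ∘ (I ⊗ H^{⊗n} ⊗ I). Then for every ψ ∈ ℂ^{2^n}, U(ψ_B ⊗ |Φ⁺_n⟩_{E₁E₂}) = 2^{−n/2} ∑_{a ∈ {0,1}^n} |a⟩_B ⊗ ψ_{E₁} ⊗ |a⟩_{E₂}; that is, up to reordering of tensor factors the output is |Φ⁺_n⟩_{B,E₂} ⊗ ψ_{E₁}, so the gadget swaps ψ out of register B into register E₁ while leaving fresh EPR pairs between B and E₂. -/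
import Mathlib


/-!
**Statement 7** (Section 5.1, Figure 6 / equation (4): in the honest case the
swap gadget is a genuine swap gate).

We model states of `ℂ^{2^n}_B ⊗ ℂ^{2^n}_{E₁} ⊗ ℂ^{2^n}_{E₂}` as complex-valued
functions of three bit strings (their amplitudes), with the genuine Pauli
strings `σ_X(a)` acting by `(σ_X(a)f)(x) = f(x+a)` and
`σ_Z(b)` acting by `(σ_Z(b)f)(x) = (−1)^{b·x} f(x)`.
-/

namespace Stmt7

def bdot {n : ℕ} (b c : Fin n → Bool) : ℕ :=
  (Finset.univ.filter fun i => b i ∧ c i).card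

def bxor {n : ℕ} (a c : Fin n → Bool) : Fin n → Bool := fun i => xor (a i) (c i)

/-- Amplitudes of a state of the three registers `B, E₁, E₂`. -/
abbrev St (n : ℕ) := (Fin n → Bool) → (Fin n → Bool) → (Fin n → Bool) → ℂ

noncomputable def invSqrt2 : ℂ := (Real.sqrt 2 : ℂ)⁻¹

/-- Hadamard `H^{⊗n}` on register `E₁`. -/
noncomputable def hadE1 {n : ℕ} (f : St n) : St n := fun x y z =>
  invSqrt2 ^ n * ∑ y' : Fin n → Bool, (-1 : ℂ) ^ bdot y y' * f x y' z

/-- `CZ_{E₁→B} = ∑_b σ_Z(b) ⊗ |b⟩⟨b| ⊗ I`. -/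
def czE1B {n : ℕ} (f : St n) : St n := fun x y z => (-1 : ℂ) ^ bdot y x * f x y z

/-- `CX_{E₁→B} = ∑_c σ_X(c) ⊗ |c⟩⟨c| ⊗ I`. -/
def cxE1B {n : ℕ} (f : St n) : St n := fun x y z => f (bxor x y) y z

/-- `CNOT_{E₂→E₁} : |u⟩_{E₁}|v⟩_{E₂} ↦ |u+v⟩_{E₁}|v⟩_{E₂}`. -/
def cnotE2E1 {n : ℕ} (f : St n) : St n := fun x y z => f x (bxor y z) z

/-- The honest swap-gadget unitary
`U = CNOT_{E₂→E₁} ∘ CX_{E₁→B} ∘ (I ⊗ H^{⊗n} ⊗ I) ∘ CZ_{E₁→B} ∘ (I ⊗ H^{⊗n} ⊗ I)`. -/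
noncomputable def uswap {n : ℕ} (f : St n) : St n :=
  cnotE2E1 (cxE1B (hadE1 (czE1B (hadE1 f))))

/-- The initial state `ψ_B ⊗ |Φ⁺_n⟩_{E₁E₂}`. -/
noncomputable def initState {n : ℕ} (ψ : (Fin n → Bool) → ℂ) : St n := fun x y z =>
  ψ x * (if y = z then invSqrt2 ^ n else 0)

lemma sign_eq_prod {n : ℕ} (a c : Fin n → Bool) :
    ((-1 : ℂ) ^ bdot a c) = ∏ i, (if a i ∧ c i then (-1:ℂ) else 1) := by
  unfold bdot
  rw [Finset.card_filter, ← Finset.prod_pow_eq_pow_sum]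
  apply Finset.prod_congr rfl
  intro i _
  by_cases h : a i ∧ c i <;> simp [h]

lemma bdot_comm {n : ℕ} (a c : Fin n → Bool) : bdot a c = bdot c a := by
  unfold bdot
  congr 1
  apply Finset.filter_congr
  intro i _
  simp [and_comm]

lemma sgn_bool (x y z : Bool) :
    (if x ∧ z then (-1:ℂ) else 1) * (if y ∧ z then (-1:ℂ) else 1)
      = if xor x y ∧ z then (-1:ℂ) else 1 := by
  cases x <;> cases y <;> cases z <;> simp

lemma sign_mul {n : ℕ} (a b c : Fin n → Bool) :
    ((-1:ℂ)^bdot a c) * ((-1:ℂ)^bdot b c) = (-1:ℂ)^bdot (bxor a b) c := by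
  rw [sign_eq_prod, sign_eq_prod, sign_eq_prod, ← Finset.prod_mul_distrib]
  apply Finset.prod_congr rfl
  intro i _
  exact sgn_bool (a i) (b i) (c i)

lemma sum_sign {n : ℕ} (a : Fin n → Bool) :
    ∑ c : Fin n → Bool, ((-1:ℂ)^bdot a c)
      = if a = (fun _ => false) then (2:ℂ)^n else 0 := by
  simp_rw [sign_eq_prod]
  rw [← Fintype.prod_sum (fun i (b : Bool) => if a i ∧ b then (-1:ℂ) else 1)]
  by_cases h : a = fun _ => false
  · subst h; simp
  · rw [if_neg h]
    obtain ⟨i, hi⟩ : ∃ i, a i = true := by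
      by_contra hc
      push_neg at hc
      exact h (funext fun i => by simpa using hc i)
    apply Finset.prod_eq_zero (Finset.mem_univ i)
    simp [hi]




lemma sqrt2_sq : ((Real.sqrt 2 : ℝ) : ℂ) ^ 2 = 2 := by
  norm_cast
  rw [Real.sq_sqrt] <;> norm_num

lemma scalar_key (n : ℕ) : invSqrt2 ^ n * invSqrt2 ^ n * (2:ℂ) ^ n = 1 := by
  have h2 : invSqrt2 ^ 2 * 2 = 1 := by
    unfold invSqrt2
    rw [inv_pow, sqrt2_sq]
    norm_num
  calc invSqrt2 ^ n * invSqrt2 ^ n * (2:ℂ) ^ n = (invSqrt2 ^ 2 * 2) ^ n := by ring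
    _ = 1 := by rw [h2, one_pow]

lemma bool_xor_eq (a b : Bool) : (xor a b = false) ↔ a = b := by
  cases a <;> cases b <;> simp


end Stmt7


open Stmt7 in
/-- For every `ψ ∈ ℂ^{2^n}`,
`U(ψ_B ⊗ |Φ⁺_n⟩) = 2^{−n/2} ∑_a |a⟩_B ⊗ ψ_{E₁} ⊗ |a⟩_{E₂}`:
the gadget swaps `ψ` out of register `B` into register `E₁`, leaving fresh EPR
pairs between `B` and `E₂`. -/
theorem stmt_7 (n : ℕ) (hn : 1 ≤ n) (ψ : (Fin n → Bool) → ℂ) :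
    uswap (initState ψ) = fun x y z => invSqrt2 ^ n * (if x = z then ψ y else 0) := by
  funext x y z
  set X := bxor x (bxor y z) with hX
  set Y := bxor y z with hY
  have h1 : ∀ y' : Fin n → Bool, czE1B (hadE1 (initState ψ)) X y' z
      = (-1:ℂ)^bdot X y' * ((-1:ℂ)^bdot z y' * (invSqrt2^n * invSqrt2^n * ψ X)) := by
    intro y'
    simp only [czE1B, hadE1, initState, mul_ite, mul_zero, Finset.sum_ite_eq',
      Finset.mem_univ, if_true]
    rw [bdot_comm y' X, bdot_comm y' z]
    ring
  have hL : uswap (initState ψ) x y z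
      = invSqrt2^n * ∑ y' : Fin n → Bool,
          (-1:ℂ)^bdot Y y' * czE1B (hadE1 (initState ψ)) X y' z := by
    simp only [uswap, cnotE2E1, cxE1B]
    rw [← hX, ← hY]
    rfl
  rw [hL]
  have h2 : ∀ y' : Fin n → Bool,
      (-1:ℂ)^bdot Y y' * czE1B (hadE1 (initState ψ)) X y' z
      = (invSqrt2^n * invSqrt2^n * ψ X) * (-1:ℂ)^bdot (bxor (bxor Y X) z) y' := by
    intro y'
    rw [h1 y', ← sign_mul (bxor Y X) z y', ← sign_mul Y X y']
    ring
  simp_rw [h2]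
  rw [← Finset.mul_sum, sum_sign]
  have hw : bxor (bxor Y X) z = bxor x z := by
    funext i
    simp only [hX, hY, bxor]
    cases x i <;> cases y i <;> cases z i <;> rfl
  rw [hw]
  have hcond : (bxor x z = fun _ => false) ↔ x = z := by
    constructor
    · intro h
      funext i
      exact (bool_xor_eq _ _).1 (congrFun h i)
    · intro h
      subst h
      funext i
      simp [bxor]
  by_cases hxz : x = z
  · rw [if_pos (hcond.2 hxz), if_pos hxz]
    have hXy : X = y := by
      funext i
      simp only [hX, hY, bxor, hxz]
      cases y i <;> cases z i <;> rfl
    rw [hXy]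
    calc invSqrt2 ^ n * (invSqrt2 ^ n * invSqrt2 ^ n * ψ y * (2:ℂ) ^ n)
        = invSqrt2 ^ n * ψ y * (invSqrt2 ^ n * invSqrt2 ^ n * (2:ℂ) ^ n) := by ring
      _ = invSqrt2 ^ n * ψ y := by rw [scalar_key, mul_one]
  · rw [if_neg (fun h => hxz (hcond.1 h)), if_neg hxz]
    ring
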